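/- (q = 1 case: a generalized Spivey formula of Hsu–Shiue type.) For all real α, β, ρ, x, all natural numbers n, and every natural number m ≥ 1: B_{n+m;x}(α,β,ρ) = Σ_{r=0}^{n} Σ_{j=0}^{m} S_{m,j}(α,β,ρ) · C(n,r) · x^j · B_{r;x}(α,β,0) · Π_{i=0}^{n−r−1} (βj − ρ − α(m+i)), where C(n,r) is the ordinary binomial coefficient. -/

import Mathlib

/-- The generalized Stirling numbers `S_{n,k}(α,β,ρ)` of Hsu–Shiue type. -/
noncomputable def hsStirling (α β ρ : ℝ) : ℕ → ℕ → ℝ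
  | 0, 0 => 1
  | 0, _ + 1 => 0
  | _ + 1, 0 => 0
  | n + 1, k + 1 =>
    if k + 1 ≤ n + 1 then
      hsStirling α β ρ n k
        + (((k : ℝ) + 1) * β - (n : ℝ) * α - ρ) * hsStirling α β ρ n (k + 1)
    else 0

/-- The generalized Bell polynomial `B_{n;x}(α,β,ρ)`. -/
noncomputable def hsBell (α β ρ : ℝ) (n : ℕ) (x : ℝ) : ℝ :=
  ∑ k ∈ Finset.range (n + 1), hsStirling α β ρ n k * x ^ k

/-!
Write `D = X (1 + β d/dX)`. The recurrence for `S_{n,k}` says `B_{n+1} = (D - nα - ρ) B_n` as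
polynomials in `X` (for `n ≥ 1`, or for every `n` when `ρ = 0`), so
`B_{m+n} = ∏_{i<n} (D - (m+i)α - ρ) B_m`. Since `D (X^j p) = X^j (D + jβ) p`, on the monomial
`X^j` of `B_m` this operator becomes the generalized falling factorial `∏_{i<n} (D + c_j - iα)` with
`c_j = jβ - mα - ρ`. Expanding it by the Vandermonde convolution for such factorials and
recognising `∏_{i<r} (D - iα) 1 = B_r(α, β, 0)` gives the formula.
-/

open Polynomial Finset

section StepDescFactorial

variable {R : Type*} [CommRing R]

def stepDescFactorial (h a : R) (n : ℕ) : R :=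
  ∏ i ∈ range n, (a - i * h)

theorem stepDescFactorial_succ (h a : R) (n : ℕ) :
    stepDescFactorial h a (n + 1) = stepDescFactorial h a n * (a - n * h) :=
  prod_range_succ _ _

theorem map_stepDescFactorial {S : Type*} [CommRing S] (f : R →+* S) (h a : R) (n : ℕ) :
    f (stepDescFactorial h a n) = stepDescFactorial (f h) (f a) n := by
  simp [stepDescFactorial]

theorem stepDescFactorial_add (h a b : R) (n : ℕ) :
    stepDescFactorial h (a + b) n = ∑ r ∈ range (n + 1),
      (n.choose r : R) * (stepDescFactorial h a r * stepDescFactorial h b (n - r)) := by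
  induction n with
  | zero => simp [stepDescFactorial]
  | succ n ih =>
    rw [sum_choose_succ_mul (fun r k ↦ stepDescFactorial h a r * stepDescFactorial h b k),
      ← sum_add_distrib, stepDescFactorial_succ, ih, sum_mul]
    refine sum_congr rfl fun r hr ↦ ?_
    have hrn : r ≤ n := Nat.lt_succ_iff.mp (mem_range.mp hr)
    rw [Nat.succ_sub hrn, stepDescFactorial_succ, stepDescFactorial_succ, Nat.cast_sub hrn]
    ring

theorem stepDescFactorial_X_add_C (h c : R) (n : ℕ) :
    stepDescFactorial (C h) (X + C c) n = ∑ r ∈ range (n + 1),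
      C (n.choose r * stepDescFactorial h c (n - r)) * stepDescFactorial (C h) X r := by
  rw [stepDescFactorial_add]
  refine sum_congr rfl fun r _ ↦ ?_
  rw [← map_stepDescFactorial C, map_mul, map_natCast]
  ring

end StepDescFactorial

section BellOperator

variable {R : Type*} [CommRing R]

theorem SemiconjBy.aeval {A : Type*} [Semiring A] [Algebra R A] {x a b : A}
    (h : SemiconjBy x b a) (F : R[X]) : SemiconjBy x (aeval b F) (aeval a F) := by
  induction F using Polynomial.induction_on with
  | C c => simpa [SemiconjBy] using (Algebra.commutes c x).symm
  | add p q hp hq => simpa using hp.add_right hq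
  | monomial n c hn => simpa [pow_succ, ← mul_assoc] using hn.mul_right h

noncomputable def bellOp (β : R) : Module.End R R[X] :=
  LinearMap.mulLeft R X ∘ₗ (LinearMap.id + β • derivative)

theorem bellOp_apply (β : R) (p : R[X]) : bellOp β p = X * (p + β • derivative p) := rfl

theorem bellOp_X_pow_mul (β : R) (j : ℕ) (p : R[X]) :
    bellOp β (X ^ j * p) = X ^ j * (bellOp β p + (j * β) • p) := by
  rcases j with _ | j
  · simp
  · simp only [bellOp_apply, derivative_mul, derivative_X_pow, smul_eq_C_mul, map_mul]
    simp only [Nat.cast_add, Nat.cast_one, add_tsub_cancel_right, pow_succ, map_add, map_natCast,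
      map_one]
    ring

theorem aeval_bellOp_X_pow_mul (β : R) (F : R[X]) (j : ℕ) (p : R[X]) :
    aeval (bellOp β) F (X ^ j * p) = X ^ j * aeval (bellOp β) (F.comp (X + C (j * β))) p := by
  have hshift : SemiconjBy (LinearMap.mulLeft R (X ^ j))
      (bellOp β + algebraMap R _ (j * β)) (bellOp β) :=
    LinearMap.ext fun q ↦ (bellOp_X_pow_mul β j q).symm
  have := LinearMap.congr_fun (hshift.aeval F) p
  simpa [aeval_comp] using this.symm

end BellOperator

section GeneralizedBell

variable (α β ρ : ℝ)

theorem hsStirling_eq_zero_of_lt : ∀ {n k : ℕ}, n < k → hsStirling α β ρ n k = 0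
  | 0, _ + 1, _ => rfl
  | _ + 1, _ + 1, h => by rw [hsStirling, if_neg (by omega)]

theorem hsStirling_succ_zero (n : ℕ) : hsStirling α β ρ (n + 1) 0 = 0 := rfl

theorem hsStirling_succ_succ (n k : ℕ) :
    hsStirling α β ρ (n + 1) (k + 1)
      = hsStirling α β ρ n k + ((k + 1) * β - n * α - ρ) * hsStirling α β ρ n (k + 1) := by
  by_cases hk : k ≤ n
  · rw [hsStirling, if_pos (by omega)]
  · rw [hsStirling_eq_zero_of_lt α β ρ (by omega : n + 1 < k + 1),
      hsStirling_eq_zero_of_lt α β ρ (by omega : n < k),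
      hsStirling_eq_zero_of_lt α β ρ (by omega : n < k + 1)]
    ring

noncomputable def bellPoly (n : ℕ) : ℝ[X] :=
  ∑ k ∈ range (n + 1), C (hsStirling α β ρ n k) * X ^ k

theorem eval_bellPoly (n : ℕ) (x : ℝ) : (bellPoly α β ρ n).eval x = hsBell α β ρ n x := by
  simp [bellPoly, hsBell, eval_finsetSum]

theorem coeff_bellPoly (n k : ℕ) : (bellPoly α β ρ n).coeff k = hsStirling α β ρ n k := by
  simp only [bellPoly, finsetSum_coeff, coeff_C_mul_X_pow, sum_ite_eq, mem_range]
  split_ifs with hk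
  · rfl
  · exact (hsStirling_eq_zero_of_lt α β ρ (by omega)).symm

theorem bellPoly_zero : bellPoly α β ρ 0 = 1 := by
  simp [bellPoly, hsStirling]

-- The definition sets `S_{1,0} = 0`, whereas the recurrence would give `-ρ`.
theorem bellPoly_succ {n : ℕ} (h : ρ = 0 ∨ n ≠ 0) :
    bellPoly α β ρ (n + 1) = bellOp β (bellPoly α β ρ n) - (n * α + ρ) • bellPoly α β ρ n := by
  ext (_ | k)
  · have hconst : (n * α + ρ) * hsStirling α β ρ n 0 = 0 := by
      rcases n with _ | n
      · simp [h.resolve_right (by simp)]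
      · simp [hsStirling_succ_zero]
    simp [bellOp_apply, coeff_bellPoly, hsStirling_succ_zero, hconst]
  · simp only [coeff_bellPoly, hsStirling_succ_succ, bellOp_apply, coeff_sub, coeff_X_mul,
      coeff_add, coeff_smul, coeff_derivative, smul_eq_mul]
    ring

theorem bellPoly_add {m : ℕ} (h : ρ = 0 ∨ m ≠ 0) (n : ℕ) :
    bellPoly α β ρ (m + n) = aeval (bellOp β)
      (stepDescFactorial (C α) (X - C (m * α + ρ)) n) (bellPoly α β ρ m) := by
  induction n with
  | zero => simp [stepDescFactorial]
  | succ n ih =>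
    have hstep : X - C (m * α + ρ) - (n : ℝ[X]) * C α = X - C ((m + n : ℕ) * α + ρ) := by
      simp only [Nat.cast_add, map_add, map_mul, map_natCast]
      ring
    rw [← add_assoc, bellPoly_succ α β ρ (h.imp_right (by omega)), ih, stepDescFactorial_succ,
      hstep, mul_comm _ (X - _), map_mul, Module.End.mul_apply]
    simp only [map_sub, aeval_X, aeval_C, LinearMap.sub_apply, Module.algebraMap_end_apply]

theorem bellPoly_zero_eq_aeval (r : ℕ) :
    bellPoly α β 0 r = aeval (bellOp β) (stepDescFactorial (C α) X r) 1 := by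
  simpa [bellPoly_zero] using bellPoly_add α β 0 (m := 0) (Or.inl rfl) r

theorem bellPoly_add_eq_sum {m : ℕ} (hm : m ≠ 0) (n : ℕ) :
    bellPoly α β ρ (m + n) = ∑ r ∈ range (n + 1), ∑ j ∈ range (m + 1),
      C (hsStirling α β ρ m j * n.choose r * stepDescFactorial α (j * β - (m * α + ρ)) (n - r))
        * X ^ j * bellPoly α β 0 r := by
  rw [bellPoly_add α β ρ (Or.inr hm), bellPoly, map_sum, sum_comm]
  refine sum_congr rfl fun j _ ↦ ?_
  have hshift : (stepDescFactorial (C α) (X - C (m * α + ρ)) n).comp (X + C (j * β))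
      = stepDescFactorial (C α) (X + C (j * β - (m * α + ρ))) n := by
    rw [← coe_compRingHom_apply, map_stepDescFactorial]
    simp only [coe_compRingHom_apply, C_comp, X_comp, map_sub, add_sub_assoc]
  conv_lhs => rw [← smul_eq_C_mul, ← mul_one (X ^ j), map_smul, aeval_bellOp_X_pow_mul, hshift,
    stepDescFactorial_X_add_C]
  simp only [map_sum, LinearMap.sum_apply, map_mul, aeval_C, Module.End.mul_apply,
    Module.algebraMap_end_apply, ← bellPoly_zero_eq_aeval, smul_eq_C_mul, mul_sum]
  refine sum_congr rfl fun r _ ↦ ?_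
  ring

end GeneralizedBell

/-- A generalized Spivey formula of Hsu–Shiue type (the `q = 1` case). -/
theorem spivey_hsu_shiue (α β ρ x : ℝ) (n m : ℕ) (hm : 1 ≤ m) :
    hsBell α β ρ (n + m) x
    = ∑ r ∈ Finset.range (n + 1), ∑ j ∈ Finset.range (m + 1),
        hsStirling α β ρ m j * (n.choose r : ℝ) * x ^ j * hsBell α β 0 r x *
          ∏ i ∈ Finset.range (n - r), (β * (j : ℝ) - ρ - α * ((m : ℝ) + (i : ℝ))) := by
  rw [← eval_bellPoly, add_comm, bellPoly_add_eq_sum α β ρ (by omega) n, eval_finsetSum]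
  refine sum_congr rfl fun r _ ↦ ?_
  rw [eval_finsetSum]
  refine sum_congr rfl fun j _ ↦ ?_
  have hprod : stepDescFactorial α (j * β - (m * α + ρ)) (n - r)
      = ∏ i ∈ range (n - r), (β * j - ρ - α * (m + i)) :=
    prod_congr rfl fun i _ ↦ by ring
  simp only [eval_mul, eval_C, eval_pow, eval_X, eval_bellPoly, hprod]
  ring
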